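/- arXiv:2503.10147 — 2 statements merged into one kernel-verified Lean document; each statement's English description precedes it below -/
import Mathlib

section
/- Let G be a finite simple graph with vertex set V, for adjacent i, j set A_{ij} = 1 if i < j and A_{ij} = −1 if i > j, let N_j denote the neighbor set of a vertex j and d_j = |N_j| ≥ 1 its degree, and let c > 0. Let x_i : ℕ → ℝ (for i ∈ V) and z_{i|j} : ℕ → ℝ (for each ordered adjacent pair (i, j)) satisfy, for all t and all adjacent i, j: z_{j|i}(t+1) = (1/2)·z_{j|i}(t) + (1/2)·(z_{i|j}(t) + 2c·A_{ij}·x_i(t)). Fix a vertex j and a time t ≥ 1, and suppose there exist signs σ(t), σ(t+1) ∈ {−1, 1} such that x_j(t) = (σ(t) − Σ_{k∈N_j} A_{jk}·z_{j|k}(t))/(c·d_j) and x_j(t+1) = (σ(t+1) − Σ_{k∈N_j} A_{jk}·z_{j|k}(t+1))/(c·d_j). Then x_j(t+1) − x_j(t) = (1/d_j)·Σ_{k∈N_j} ( x_k(t) − (1/2)·x_k(t−1) − (1/2)·x_j(t−1) ) + r, where r = (σ(t+1) − σ(t))/(c·d_j), and moreover r ∈ {0, 2/(c·d_j), −2/(c·d_j)}.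 -/
open Finset

/-! Since `x_j(t) = (σ(t) - Σ_k A_jk z_{j|k}(t)) / (c d_j)` at both times, `x_j(t+1) - x_j(t)` is
governed by the increments `A_jk (z_{j|k}(t+1) - z_{j|k}(t))`. Unrolling the averaged update one
step further back on both directions of the edge `{j, k}` eliminates every `z` from that increment,
leaving `-c (x_k(t) - x_k(t-1)/2 - x_j(t-1)/2)` because `A_kj = -A_jk` and `A_jk² = 1`. -/

section Orientation

variable {V : Type*} [LinearOrder V] {A : V → V → ℝ}

theorem orientation_swap (hA : ∀ i j : V, A i j = if i < j then 1 else -1) {i j : V}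
    (hij : i ≠ j) : A j i = -A i j := by
  rcases hij.lt_or_gt with h | h
  · simp [hA, h, h.not_gt]
  · simp [hA, h, h.not_gt]

theorem orientation_mul_self (hA : ∀ i j : V, A i j = if i < j then 1 else -1) (i j : V) :
    A i j * A i j = 1 := by
  rw [hA]; split_ifs <;> norm_num

end Orientation

section AveragedUpdate

variable {V : Type*} {G : SimpleGraph V} {A : V → V → ℝ} {c : ℝ}
  {x : V → ℕ → ℝ} {z : V → V → ℕ → ℝ}

theorem oriented_increment_eq
    (hz : ∀ i j : V, G.Adj i j → ∀ t : ℕ,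
      z j i (t + 1) = (1 / 2) * z j i t + (1 / 2) * (z i j t + 2 * c * A i j * x i t))
    {j k : V} (hjk : G.Adj j k) (hswap : A k j = -A j k) (hsq : A j k * A j k = 1) (s : ℕ) :
    A j k * z j k (s + 1 + 1) - A j k * z j k (s + 1) =
      -(c * (x k (s + 1) - (1 / 2) * x k s - (1 / 2) * x j s)) := by
  have h₁ := hz k j hjk.symm (s + 1)
  have h₂ := hz k j hjk.symm s
  have h₃ := hz j k hjk s
  rw [hswap] at h₁ h₂
  linear_combination A j k * h₁ - (A j k / 2) * h₂ + (A j k / 2) * h₃ -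
    c * (x k (s + 1) - 1 / 2 * x k s - 1 / 2 * x j s) * hsq

variable [Fintype V] [DecidableRel G.Adj] [LinearOrder V]

theorem sum_oriented_increment_eq
    (hA : ∀ i j : V, A i j = if i < j then 1 else -1)
    (hz : ∀ i j : V, G.Adj i j → ∀ t : ℕ,
      z j i (t + 1) = (1 / 2) * z j i t + (1 / 2) * (z i j t + 2 * c * A i j * x i t))
    (j : V) (s : ℕ) :
    ∑ k ∈ G.neighborFinset j, A j k * z j k (s + 1 + 1) -
        ∑ k ∈ G.neighborFinset j, A j k * z j k (s + 1) =
      -(c * ∑ k ∈ G.neighborFinset j, (x k (s + 1) - (1 / 2) * x k s - (1 / 2) * x j s)) := by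
  rw [← sum_sub_distrib, mul_sum, ← sum_neg_distrib]
  refine sum_congr rfl fun k hk => ?_
  have hjk := (G.mem_neighborFinset j k).1 hk
  exact oriented_increment_eq hz hjk (orientation_swap hA hjk.ne) (orientation_mul_self hA j k) s

end AveragedUpdate

theorem boundary_value_sub {c D σ σ' Z Z' S : ℝ} (hc : c ≠ 0) (hZ : Z' - Z = -(c * S)) :
    (σ' - Z') / (c * D) - (σ - Z) / (c * D) = 1 / D * S + (σ' - σ) / (c * D) := by
  have hnum : σ' - Z' - (σ - Z) = c * S + (σ' - σ) := by linear_combination -hZ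
  rw [← sub_div, hnum, add_div, mul_div_mul_left _ _ hc, one_div_mul_eq_div]

theorem sign_sub_div_mem {σ σ' e : ℝ} (hσ : σ = 1 ∨ σ = -1) (hσ' : σ' = 1 ∨ σ' = -1) :
    (σ' - σ) / e = 0 ∨ (σ' - σ) / e = 2 / e ∨ (σ' - σ) / e = -2 / e := by
  rcases hσ with rfl | rfl <;> rcases hσ' with rfl | rfl <;> norm_num

theorem stmt_3_general {V : Type*} [Fintype V] [LinearOrder V]
    (G : SimpleGraph V) [DecidableRel G.Adj]
    (A : V → V → ℝ) (hA : ∀ i j : V, A i j = if i < j then 1 else -1)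
    (d : V → ℕ)
    (c : ℝ) (hc : 0 < c)
    (x : V → ℕ → ℝ) (z : V → V → ℕ → ℝ)
    (hz : ∀ i j : V, G.Adj i j → ∀ t : ℕ,
      z j i (t + 1) = (1 / 2) * z j i t + (1 / 2) * (z i j t + 2 * c * A i j * x i t))
    (j : V) (t : ℕ) (ht : 1 ≤ t)
    (σ : ℕ → ℝ)
    (hσt : σ t = 1 ∨ σ t = -1) (hσt1 : σ (t + 1) = 1 ∨ σ (t + 1) = -1)
    (hxt : x j t =
      (σ t - ∑ k ∈ G.neighborFinset j, A j k * z j k t) / (c * d j))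
    (hxt1 : x j (t + 1) =
      (σ (t + 1) - ∑ k ∈ G.neighborFinset j, A j k * z j k (t + 1)) / (c * d j)) :
    x j (t + 1) - x j t =
      (1 / d j) * ∑ k ∈ G.neighborFinset j,
        (x k t - (1 / 2) * x k (t - 1) - (1 / 2) * x j (t - 1)) +
      (σ (t + 1) - σ t) / (c * d j) ∧
    ((σ (t + 1) - σ t) / (c * d j) = 0 ∨
     (σ (t + 1) - σ t) / (c * d j) = 2 / (c * d j) ∨
     (σ (t + 1) - σ t) / (c * d j) = -2 / (c * d j)) := by
  obtain ⟨s, rfl⟩ : ∃ s, t = s + 1 := ⟨t - 1, (Nat.succ_pred_eq_of_pos ht).symm⟩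
  refine ⟨?_, sign_sub_div_mem hσt hσt1⟩
  rw [hxt1, hxt, Nat.add_sub_cancel]
  exact boundary_value_sub hc.ne' (sum_oriented_increment_eq hA hz j s)

/-- Equation (8) of the paper: if node `j`'s x-update takes one of the two boundary
values at times `t` and `t+1`, then its successive primal iterates satisfy a recursion
depending only on previously broadcast values, up to an offset `r ∈ {0, ±2/(c·d_j)}`. -/
theorem stmt_3 {V : Type*} [Fintype V] [LinearOrder V]
    (G : SimpleGraph V) [DecidableRel G.Adj]
    (A : V → V → ℝ) (hA : ∀ i j : V, A i j = if i < j then 1 else -1)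
    (d : V → ℕ) (hd : ∀ j : V, d j = (G.neighborFinset j).card)
    (hd1 : ∀ j : V, 1 ≤ d j)
    (c : ℝ) (hc : 0 < c)
    (x : V → ℕ → ℝ) (z : V → V → ℕ → ℝ)
    (hz : ∀ i j : V, G.Adj i j → ∀ t : ℕ,
      z j i (t + 1) = (1 / 2) * z j i t + (1 / 2) * (z i j t + 2 * c * A i j * x i t))
    (j : V) (t : ℕ) (ht : 1 ≤ t)
    (σ : ℕ → ℝ)
    (hσt : σ t = 1 ∨ σ t = -1) (hσt1 : σ (t + 1) = 1 ∨ σ (t + 1) = -1)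
    (hxt : x j t =
      (σ t - ∑ k ∈ G.neighborFinset j, A j k * z j k t) / (c * d j))
    (hxt1 : x j (t + 1) =
      (σ (t + 1) - ∑ k ∈ G.neighborFinset j, A j k * z j k (t + 1)) / (c * d j)) :
    x j (t + 1) - x j t =
      (1 / d j) * ∑ k ∈ G.neighborFinset j,
        (x k t - (1 / 2) * x k (t - 1) - (1 / 2) * x j (t - 1)) +
      (σ (t + 1) - σ t) / (c * d j) ∧
    ((σ (t + 1) - σ t) / (c * d j) = 0 ∨
     (σ (t + 1) - σ t) / (c * d j) = 2 / (c * d j) ∨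
     (σ (t + 1) - σ t) / (c * d j) = -2 / (c * d j)) :=
  stmt_3_general G A hA d c hc x z hz j t ht σ hσt hσt1 hxt hxt1
end

section
/- Let G be a finite simple graph with vertex set V, for adjacent i, j set A_{ij} = 1 if i < j and A_{ij} = −1 if i > j, let N_i denote the neighbor set of i and d_i = |N_i| ≥ 1 its degree, and let c > 0. For private data s : V → ℝ, define an execution of the median-consensus algorithm as sequences x_i : ℕ → ℝ and z_{i|j} : ℕ → ℝ satisfying, for all t: x_i(t) = T_{c,d_i}(s_i, a_i(t)) where a_i(t) = Σ_{j∈N_i} A_{ij}·z_{i|j}(t) and T_{c,d}(s, a) := (−1 − a)/(c·d) if (−1 − a)/(c·d) > s, (1 − a)/(c·d) if (1 − a)/(c·d) < s, and s otherwise; and z_{j|i}(t+1) = (1/2)·z_{j|i}(t) + (1/2)·(z_{i|j}(t) + 2c·A_{ij}·x_i(t)) for all adjacent i, j. Let s, s' : V → ℝ be two private data vectors, and let (x, z) and (x', z') be executions for s and s' respectively with the same initial values z_{i|j}(0) = z'_{i|j}(0) for all ordered adjacent pairs. Fix T ∈ ℕ and suppose that for every i ∈ V and every t ≤ T one has x_i(t)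 ≠ s_i, x'_i(t) ≠ s'_i, and the two executions take the same branch, i.e., sign(x_i(t) − s_i) = sign(x'_i(t) − s'_i). Then x_i(t) = x'_i(t) for all i ∈ V and all t ≤ T, and z_{i|j}(t) = z'_{i|j}(t) for all ordered adjacent pairs and all t ≤ T. -/
open Finset

/-- The median-consensus local update map. -/
noncomputable def medianUpdate (c : ℝ) (d : ℕ) (s a : ℝ) : ℝ :=
  if (-1 - a) / (c * d) > s then (-1 - a) / (c * d)
  else if (1 - a) / (c * d) < s then (1 - a) / (c * d)
  else s

lemma medianUpdate_eq_of_sign (c : ℝ) (d : ℕ) (s s' a : ℝ)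
    (h1 : medianUpdate c d s a ≠ s) (h2 : medianUpdate c d s' a ≠ s')
    (hs : Real.sign (medianUpdate c d s a - s) = Real.sign (medianUpdate c d s' a - s')) :
    medianUpdate c d s a = medianUpdate c d s' a := by
  unfold medianUpdate at *
  split_ifs at * with hA hB hC hD <;> try rfl
  all_goals first
    | exact absurd rfl h1
    | exact absurd rfl h2
    | (rw [Real.sign_of_pos (by linarith), Real.sign_of_neg (by linarith)] at hs; norm_num at hs)
    | (rw [Real.sign_of_neg (by linarith), Real.sign_of_pos (by linarith)] at hs; norm_num at hs)

/-- Determinism step of Theorem 1 (perfect privacy): two executions of the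
median-consensus algorithm with the same initial auxiliary variables, whose updates
never return the private value and always take the same branch up to time `T`,
produce identical transcripts up to time `T`, independently of the private data. -/
theorem stmt_4 {V : Type*} [Fintype V] [LinearOrder V]
    (G : SimpleGraph V) [DecidableRel G.Adj]
    (A : V → V → ℝ) (hA : ∀ i j : V, A i j = if i < j then 1 else -1)
    (d : V → ℕ) (hd : ∀ i : V, d i = (G.neighborFinset i).card)
    (hd1 : ∀ i : V, 1 ≤ d i)
    (c : ℝ) (hc : 0 < c)
    (s s' : V → ℝ)
    (x x' : V → ℕ → ℝ) (z z' : V → V → ℕ → ℝ)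
    (hx : ∀ i : V, ∀ t : ℕ,
      x i t = medianUpdate c (d i) (s i) (∑ j ∈ G.neighborFinset i, A i j * z i j t))
    (hx' : ∀ i : V, ∀ t : ℕ,
      x' i t = medianUpdate c (d i) (s' i) (∑ j ∈ G.neighborFinset i, A i j * z' i j t))
    (hz : ∀ i j : V, G.Adj i j → ∀ t : ℕ,
      z j i (t + 1) = (1 / 2) * z j i t + (1 / 2) * (z i j t + 2 * c * A i j * x i t))
    (hz' : ∀ i j : V, G.Adj i j → ∀ t : ℕ,
      z' j i (t + 1) = (1 / 2) * z' j i t + (1 / 2) * (z' i j t + 2 * c * A i j * x' i t))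
    (hinit : ∀ i j : V, G.Adj i j → z i j 0 = z' i j 0)
    (T : ℕ)
    (hne : ∀ i : V, ∀ t : ℕ, t ≤ T → x i t ≠ s i)
    (hne' : ∀ i : V, ∀ t : ℕ, t ≤ T → x' i t ≠ s' i)
    (hsign : ∀ i : V, ∀ t : ℕ, t ≤ T →
      Real.sign (x i t - s i) = Real.sign (x' i t - s' i)) :
    (∀ i : V, ∀ t : ℕ, t ≤ T → x i t = x' i t) ∧
    (∀ i j : V, G.Adj i j → ∀ t : ℕ, t ≤ T → z i j t = z' i j t) := by
  have hxstep : ∀ t : ℕ, t ≤ T → (∀ i j : V, G.Adj i j → z i j t = z' i j t) →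
      ∀ i : V, x i t = x' i t := by
    intro t ht hzeq i
    have hsum : (∑ j ∈ G.neighborFinset i, A i j * z i j t)
        = ∑ j ∈ G.neighborFinset i, A i j * z' i j t := by
      apply Finset.sum_congr rfl
      intro j hj
      rw [hzeq i j ((G.mem_neighborFinset i j).mp hj)]
    rw [hx i t, hx' i t, ← hsum]
    refine medianUpdate_eq_of_sign _ _ _ _ _ ?_ ?_ ?_
    · rw [← hx i t]; exact hne i t ht
    · rw [hsum, ← hx' i t]; exact hne' i t ht
    · rw [← hx i t, hsum, ← hx' i t]; exact hsign i t ht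
  have hzeq : ∀ t : ℕ, t ≤ T → ∀ i j : V, G.Adj i j → z i j t = z' i j t := by
    intro t
    induction t with
    | zero => intro _; exact hinit
    | succ t ih =>
      intro ht i j hij
      have ht' : t ≤ T := Nat.le_of_succ_le ht
      have hzt := ih ht'
      have hxt := hxstep t ht' hzt
      rw [hz j i hij.symm t, hz' j i hij.symm t, hzt i j hij, hzt j i hij.symm, hxt j]
  exact ⟨fun i t ht => hxstep t ht (hzeq t ht) i, fun i j hij t ht => hzeq t ht i j hij⟩
end
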